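/- Let τ and σ be polygonal curves in ℝ^d with vertex sets V(τ) and V(σ), let ε ∈ (0,1), and let f : ℝ^d → ℝ^{d'} satisfy (1−ε)‖x − y‖ ≤ ‖f(x) − f(y)‖ ≤ (1+ε)‖x − y‖ for all x, y ∈ V(τ) ∪ V(σ). Let F(τ) and F(σ) be the polygonal curves obtained by mapping each vertex through f, keeping the same instants, and linearly interpolating. Let α(τ,σ) be the maximum Euclidean distance between two consecutive vertices of τ or of σ. Then d_F(F(τ), F(σ))² ≥ (1−ε)² d_F(τ, σ)² − 2ε α(τ,σ)². -/
import Mathlib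


/-- The (continuous) Fréchet distance between two curves, restricted to the parameter
interval `[0,1]`: the infimum over reparameterizations `h` (continuous bijections of `[0,1]`
fixing the endpoints) of the supremum over `t ∈ [0,1]` of `dist (τ t) (σ (h t))`. -/
noncomputable def frechetDist {X : Type*} [PseudoMetricSpace X] (τ σ : ℝ → X) : ℝ :=
  sInf {r : ℝ | ∃ h : ℝ → ℝ, ContinuousOn h (Set.Icc 0 1) ∧
    Set.BijOn h (Set.Icc 0 1) (Set.Icc 0 1) ∧ h 0 = 0 ∧ h 1 = 1 ∧
    ∀ t ∈ Set.Icc (0 : ℝ) 1, dist (τ t) (σ (h t)) ≤ r}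

/-- `τ` is the polygonal curve with vertices `v` and instants `ts`: on each interval
`[ts i, ts (i+1)]` it linearly interpolates between `v i` and `v (i+1)`. -/
def IsPolyOn {X : Type*} [AddCommGroup X] [Module ℝ X] {m : ℕ}
    (τ : ℝ → X) (v : Fin m → X) (ts : Fin m → ℝ) : Prop :=
  ∀ (i : ℕ) (hi : i + 1 < m), ∀ t : ℝ,
    ts ⟨i, by omega⟩ ≤ t → t ≤ ts ⟨i + 1, hi⟩ →
    τ t = v ⟨i, by omega⟩ +
      ((t - ts ⟨i, by omega⟩) / (ts ⟨i + 1, hi⟩ - ts ⟨i, by omega⟩)) •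
        (v ⟨i + 1, hi⟩ - v ⟨i, by omega⟩)

/-- The maximum distance between two consecutive vertices of a curve with vertices `v`. -/
noncomputable def edgeMax {X : Type*} [PseudoMetricSpace X] {m : ℕ} (v : Fin m → X) : ℝ :=
  sSup {r : ℝ | ∃ (i : ℕ) (hi : i + 1 < m), r = dist (v ⟨i, by omega⟩) (v ⟨i + 1, hi⟩)}

set_option maxHeartbeats 1000000

open RealInnerProductSpace in
open RealInnerProductSpace in
lemma quad_id {F : Type*} [NormedAddCommGroup F] [InnerProductSpace ℝ F]
    (z1 z2 z3 z4 : F) (l1 l2 l3 l4 : ℝ) (h : l1 + l2 + l3 + l4 = 0) :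
    ‖l1 • z1 + l2 • z2 + l3 • z3 + l4 • z4‖ ^ 2 =
      -(l1*l2*‖z1 - z2‖^2 + l1*l3*‖z1 - z3‖^2 + l1*l4*‖z1 - z4‖^2 +
        l2*l3*‖z2 - z3‖^2 + l2*l4*‖z2 - z4‖^2 + l3*l4*‖z3 - z4‖^2) := by
  simp only [← real_inner_self_eq_norm_sq, inner_sub_left, inner_sub_right,
    inner_add_left, inner_add_right, real_inner_smul_left, real_inner_smul_right]
  linear_combination (l1 * ⟪z1, z1⟫ + l2 * ⟪z2, z2⟫ + l3 * ⟪z3, z3⟫ + l4 * ⟪z4, z4⟫) * h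

lemma key_pointwise {E F : Type*} [NormedAddCommGroup E] [InnerProductSpace ℝ E]
    [NormedAddCommGroup F] [InnerProductSpace ℝ F]
    (ε α : ℝ) (hε0 : 0 < ε) (hε1 : ε < 1)
    (a b c w : E) (A B C W : F) (s u : ℝ)
    (hs0 : 0 ≤ s) (hs1 : s ≤ 1) (hu0 : 0 ≤ u) (hu1 : u ≤ 1)
    (hab : ‖a - b‖ ≤ α) (hcw : ‖c - w‖ ≤ α)
    (lac : (1 - ε) * ‖a - c‖ ≤ ‖A - C‖) (law : (1 - ε) * ‖a - w‖ ≤ ‖A - W‖)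
    (lbc : (1 - ε) * ‖b - c‖ ≤ ‖B - C‖) (lbw : (1 - ε) * ‖b - w‖ ≤ ‖B - W‖)
    (uab : ‖A - B‖ ≤ (1 + ε) * ‖a - b‖) (ucw : ‖C - W‖ ≤ (1 + ε) * ‖c - w‖) :
    (1 - ε) ^ 2 * ‖(a + s • (b - a)) - (c + u • (w - c))‖ ^ 2 - 2 * ε * α ^ 2 ≤
      ‖(A + s • (B - A)) - (C + u • (W - C))‖ ^ 2 := by
  have hα : 0 ≤ α := le_trans (norm_nonneg _) hab
  have e1 : (a + s • (b - a)) - (c + u • (w - c)) =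
      (1 - s) • a + s • b + (-(1 - u)) • c + (-u) • w := by module
  have e2 : (A + s • (B - A)) - (C + u • (W - C)) =
      (1 - s) • A + s • B + (-(1 - u)) • C + (-u) • W := by module
  rw [e1, e2, quad_id a b c w _ _ _ _ (by ring), quad_id A B C W _ _ _ _ (by ring)]
  have sq_low : ∀ (x y : E) (X Y : F), (1 - ε) * ‖x - y‖ ≤ ‖X - Y‖ →
      (1 - ε)^2 * ‖x - y‖^2 ≤ ‖X - Y‖^2 := by
    intro x y X Y h
    have h1 : 0 ≤ (1 - ε) * ‖x - y‖ := mul_nonneg (by linarith) (norm_nonneg _)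
    calc (1 - ε)^2 * ‖x - y‖^2 = ((1 - ε) * ‖x - y‖)^2 := by ring
      _ ≤ ‖X - Y‖^2 := by nlinarith [norm_nonneg (X - Y)]
  have Lac := sq_low a c A C lac
  have Law := sq_low a w A W law
  have Lbc := sq_low b c B C lbc
  have Lbw := sq_low b w B W lbw
  have Uab : ‖A - B‖^2 ≤ (1 + ε)^2 * ‖a - b‖^2 := by
    calc ‖A - B‖^2 ≤ ((1 + ε) * ‖a - b‖)^2 := pow_le_pow_left₀ (norm_nonneg _) uab 2
      _ = (1 + ε)^2 * ‖a - b‖^2 := by ring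
  have Ucw : ‖C - W‖^2 ≤ (1 + ε)^2 * ‖c - w‖^2 := by
    calc ‖C - W‖^2 ≤ ((1 + ε) * ‖c - w‖)^2 := pow_le_pow_left₀ (norm_nonneg _) ucw 2
      _ = (1 + ε)^2 * ‖c - w‖^2 := by ring
  have nab : ‖a - b‖^2 ≤ α^2 := pow_le_pow_left₀ (norm_nonneg _) hab 2
  have ncw : ‖c - w‖^2 ≤ α^2 := pow_le_pow_left₀ (norm_nonneg _) hcw 2
  have prodbd : ∀ r : ℝ, 0 ≤ r → r ≤ 1 → ∀ D : ℝ, D ≤ 4 * ε * α^2 →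
      r * (1 - r) * D ≤ ε * α^2 := by
    intro r hr0 hr1 D hD
    have hr : 0 ≤ r * (1 - r) := mul_nonneg hr0 (by linarith)
    have hr4 : r * (1 - r) ≤ 1/4 := by nlinarith [sq_nonneg (1 - 2*r)]
    rcases le_or_gt D 0 with hD0 | hD0
    · have h2 : r * (1 - r) * D ≤ 0 := mul_nonpos_of_nonneg_of_nonpos hr hD0
      have h3 : 0 ≤ ε * α^2 := by positivity
      linarith
    · calc r * (1 - r) * D ≤ (1/4) * (4 * ε * α^2) :=
            mul_le_mul hr4 hD hD0.le (by norm_num)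
        _ = ε * α^2 := by ring
  have D12 : ‖A - B‖^2 - (1 - ε)^2 * ‖a - b‖^2 ≤ 4 * ε * α^2 := by
    have h4 : 4 * ε * ‖a - b‖^2 ≤ 4 * ε * α^2 := by
      have := mul_le_mul_of_nonneg_left nab (by positivity : (0:ℝ) ≤ 4 * ε)
      linarith
    nlinarith [Uab]
  have D34 : ‖C - W‖^2 - (1 - ε)^2 * ‖c - w‖^2 ≤ 4 * ε * α^2 := by
    have h4 : 4 * ε * ‖c - w‖^2 ≤ 4 * ε * α^2 := by
      have := mul_le_mul_of_nonneg_left ncw (by positivity : (0:ℝ) ≤ 4 * ε)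
      linarith
    nlinarith [Ucw]
  have k12 := prodbd s hs0 hs1 _ D12
  have k34 := prodbd u hu0 hu1 _ D34
  have c13 : 0 ≤ (1 - s) * (1 - u) * (‖A - C‖^2 - (1 - ε)^2 * ‖a - c‖^2) :=
    mul_nonneg (mul_nonneg (by linarith) (by linarith)) (by linarith)
  have c14 : 0 ≤ (1 - s) * u * (‖A - W‖^2 - (1 - ε)^2 * ‖a - w‖^2) :=
    mul_nonneg (mul_nonneg (by linarith) hu0) (by linarith)
  have c23 : 0 ≤ s * (1 - u) * (‖B - C‖^2 - (1 - ε)^2 * ‖b - c‖^2) :=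
    mul_nonneg (mul_nonneg hs0 (by linarith)) (by linarith)
  have c24 : 0 ≤ s * u * (‖B - W‖^2 - (1 - ε)^2 * ‖b - w‖^2) :=
    mul_nonneg (mul_nonneg hs0 hu0) (by linarith)
  nlinarith [k12, k34, c13, c14, c23, c24]

lemma edge_le_edgeMax {X : Type*} [PseudoMetricSpace X] {m : ℕ} (v : Fin m → X)
    (i : ℕ) (hi : i + 1 < m) :
    dist (v ⟨i, by omega⟩) (v ⟨i + 1, hi⟩) ≤ edgeMax v := by
  apply le_csSup
  · apply BddAbove.mono (s := {r : ℝ | ∃ (i : ℕ) (hi : i + 1 < m),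
      r = dist (v ⟨i, by omega⟩) (v ⟨i + 1, hi⟩)})
      (t := (fun p : Fin m × Fin m => dist (v p.1) (v p.2)) '' Set.univ)
    · rintro r ⟨j, hj, rfl⟩
      exact ⟨(⟨j, by omega⟩, ⟨j + 1, hj⟩), Set.mem_univ _, rfl⟩
    · exact (Set.finite_univ.image _).bddAbove
  · exact ⟨i, hi, rfl⟩

lemma exists_seg {m : ℕ} (hm : 2 ≤ m) (ts : Fin m → ℝ) (hmono : StrictMono ts)
    (h0 : ts ⟨0, by omega⟩ = 0) (h1 : ts ⟨m - 1, by omega⟩ = 1)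
    {t : ℝ} (ht0 : 0 ≤ t) (ht1 : t ≤ 1) :
    ∃ (i : ℕ) (hi : i + 1 < m), ts ⟨i, by omega⟩ ≤ t ∧ t ≤ ts ⟨i + 1, hi⟩ := by
  have main : ∀ k (hk : k < m), t ≤ ts ⟨k, hk⟩ →
      ∃ (i : ℕ) (hi : i + 1 < m), ts ⟨i, by omega⟩ ≤ t ∧ t ≤ ts ⟨i + 1, hi⟩ := by
    intro k
    induction k with
    | zero =>
      intro hk hle
      refine ⟨0, by omega, ?_, ?_⟩
      · rw [h0]; exact ht0
      · exact le_trans hle (le_of_lt (hmono (by exact Fin.mk_lt_mk.2 (by omega))))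
    | succ k ih =>
      intro hk hle
      rcases le_or_gt (ts ⟨k, by omega⟩) t with h | h
      · exact ⟨k, hk, h, hle⟩
      · exact ih (by omega) h.le
  exact main (m - 1) (by omega) (by rw [h1]; exact ht1)

lemma interp_pair {E F : Type*} [AddCommGroup E] [Module ℝ E] [AddCommGroup F] [Module ℝ F]
    {m : ℕ} (hm : 2 ≤ m) (v : Fin m → E) (fv : Fin m → F) (ts : Fin m → ℝ)
    (hmono : StrictMono ts) (h0 : ts ⟨0, by omega⟩ = 0) (h1 : ts ⟨m - 1, by omega⟩ = 1)
    (τ : ℝ → E) (Fτ : ℝ → F) (hτ : IsPolyOn τ v ts) (hF : IsPolyOn Fτ fv ts)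
    {t : ℝ} (ht0 : 0 ≤ t) (ht1 : t ≤ 1) :
    ∃ (i : ℕ) (hi : i + 1 < m) (s : ℝ), 0 ≤ s ∧ s ≤ 1 ∧
      τ t = v ⟨i, by omega⟩ + s • (v ⟨i + 1, hi⟩ - v ⟨i, by omega⟩) ∧
      Fτ t = fv ⟨i, by omega⟩ + s • (fv ⟨i + 1, hi⟩ - fv ⟨i, by omega⟩) := by
  obtain ⟨i, hi, hle, hge⟩ := exists_seg hm ts hmono h0 h1 ht0 ht1
  have hlt : ts ⟨i, by omega⟩ < ts ⟨i + 1, hi⟩ := hmono (Fin.mk_lt_mk.2 (by omega))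
  refine ⟨i, hi, (t - ts ⟨i, by omega⟩) / (ts ⟨i + 1, hi⟩ - ts ⟨i, by omega⟩),
    div_nonneg (by linarith) (by linarith),
    (div_le_one (by linarith)).2 (by linarith),
    hτ i hi t hle hge, hF i hi t hle hge⟩

/-- If `f` is a `(1±ε)`-distortion embedding of the vertices of polygonal
curves `τ, σ` and `Fτ, Fσ` are the polygonal curves on the images of the vertices (same
instants), then `d_F(Fτ,Fσ)² ≥ (1-ε)² d_F(τ,σ)² - 2ε α(τ,σ)²` with `α(τ,σ)` the maximum
edge length of `τ` or `σ`. -/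
theorem jl_frechet_lower {d d' : ℕ} (ε : ℝ) (hε0 : 0 < ε) (hε1 : ε < 1)
    {mτ mσ : ℕ} (hmτ : 2 ≤ mτ) (hmσ : 2 ≤ mσ)
    (vτ : Fin mτ → EuclideanSpace ℝ (Fin d)) (tτ : Fin mτ → ℝ)
    (vσ : Fin mσ → EuclideanSpace ℝ (Fin d)) (tσ : Fin mσ → ℝ)
    (htτ : StrictMono tτ) (htτ0 : tτ ⟨0, by omega⟩ = 0) (htτ1 : tτ ⟨mτ - 1, by omega⟩ = 1)
    (htσ : StrictMono tσ) (htσ0 : tσ ⟨0, by omega⟩ = 0) (htσ1 : tσ ⟨mσ - 1, by omega⟩ = 1)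
    (τ σ : ℝ → EuclideanSpace ℝ (Fin d))
    (hτ : IsPolyOn τ vτ tτ) (hσ : IsPolyOn σ vσ tσ)
    (f : EuclideanSpace ℝ (Fin d) → EuclideanSpace ℝ (Fin d'))
    (hf : ∀ x ∈ Set.range vτ ∪ Set.range vσ, ∀ y ∈ Set.range vτ ∪ Set.range vσ,
      (1 - ε) * ‖x - y‖ ≤ ‖f x - f y‖ ∧ ‖f x - f y‖ ≤ (1 + ε) * ‖x - y‖)
    (Fτ Fσ : ℝ → EuclideanSpace ℝ (Fin d'))
    (hFτ : IsPolyOn Fτ (f ∘ vτ) tτ) (hFσ : IsPolyOn Fσ (f ∘ vσ) tσ) :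
    (1 - ε) ^ 2 * frechetDist τ σ ^ 2 - 2 * ε * max (edgeMax vτ) (edgeMax vσ) ^ 2
      ≤ frechetDist Fτ Fσ ^ 2 := by
  classical
  set α := max (edgeMax vτ) (edgeMax vσ) with hαdef
  have hα0 : 0 ≤ α :=
    le_trans (le_trans dist_nonneg (edge_le_edgeMax vτ 0 (by omega))) (le_max_left _ _)
  set S := {r : ℝ | ∃ h : ℝ → ℝ, ContinuousOn h (Set.Icc 0 1) ∧
    Set.BijOn h (Set.Icc 0 1) (Set.Icc 0 1) ∧ h 0 = 0 ∧ h 1 = 1 ∧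
    ∀ t ∈ Set.Icc (0 : ℝ) 1, dist (Fτ t) (Fσ (h t)) ≤ r} with hSdef
  -- norm bound for Fτ, Fσ on [0,1]
  have hne : Nonempty (Fin mτ) := ⟨⟨0, by omega⟩⟩
  have hne' : Nonempty (Fin mσ) := ⟨⟨0, by omega⟩⟩
  have bdd : ∀ {m : ℕ} (hm : 2 ≤ m) (fv : Fin m → EuclideanSpace ℝ (Fin d'))
      (ts : Fin m → ℝ) (hmono : StrictMono ts) (h0 : ts ⟨0, by omega⟩ = 0)
      (h1 : ts ⟨m - 1, by omega⟩ = 1) (G : ℝ → EuclideanSpace ℝ (Fin d'))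
      (hG : IsPolyOn G fv ts), ∃ M, ∀ t ∈ Set.Icc (0:ℝ) 1, ‖G t‖ ≤ M := by
    intro m hm fv ts hmono h0 h1 G hG
    have hnem : Nonempty (Fin m) := ⟨⟨0, by omega⟩⟩
    refine ⟨Finset.univ.sup' Finset.univ_nonempty (fun i => ‖fv i‖), ?_⟩
    intro t ht
    obtain ⟨i, hi, s, hs0, hs1, hGt, _⟩ :=
      interp_pair hm fv fv ts hmono h0 h1 G G hG hG ht.1 ht.2
    have he : fv ⟨i, by omega⟩ + s • (fv ⟨i+1, hi⟩ - fv ⟨i, by omega⟩) =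
        (1 - s) • fv ⟨i, by omega⟩ + s • fv ⟨i+1, hi⟩ := by module
    rw [hGt, he]
    have b1 : ‖fv (⟨i, by omega⟩ : Fin m)‖ ≤ Finset.univ.sup' Finset.univ_nonempty (fun i => ‖fv i‖) :=
      Finset.le_sup' (fun i => ‖fv i‖) (Finset.mem_univ (⟨i, by omega⟩ : Fin m))
    have b2 : ‖fv (⟨i+1, hi⟩ : Fin m)‖ ≤ Finset.univ.sup' Finset.univ_nonempty (fun i => ‖fv i‖) :=
      Finset.le_sup' (fun i => ‖fv i‖) (Finset.mem_univ (⟨i+1, hi⟩ : Fin m))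
    calc ‖(1 - s) • fv ⟨i, by omega⟩ + s • fv ⟨i+1, hi⟩‖
        ≤ ‖(1 - s) • fv (⟨i, by omega⟩ : Fin m)‖ + ‖s • fv (⟨i+1, hi⟩ : Fin m)‖ := norm_add_le _ _
      _ = (1 - s) * ‖fv (⟨i, by omega⟩ : Fin m)‖ + s * ‖fv (⟨i+1, hi⟩ : Fin m)‖ := by
          rw [norm_smul, norm_smul, Real.norm_of_nonneg (by linarith), Real.norm_of_nonneg hs0]
      _ ≤ _ := by nlinarith [b1, b2, norm_nonneg (fv (⟨i, by omega⟩ : Fin m)),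
          norm_nonneg (fv (⟨i+1, hi⟩ : Fin m))]
  obtain ⟨M1, hM1⟩ := bdd hmτ (f ∘ vτ) tτ htτ htτ0 htτ1 Fτ hFτ
  obtain ⟨M2, hM2⟩ := bdd hmσ (f ∘ vσ) tσ htσ htσ0 htσ1 Fσ hFσ
  have hSne : S.Nonempty := by
    refine ⟨M1 + M2, id, continuousOn_id, Set.bijOn_id _, rfl, rfl, ?_⟩
    intro t ht
    calc dist (Fτ t) (Fσ (id t)) = ‖Fτ t - Fσ t‖ := dist_eq_norm _ _
      _ ≤ ‖Fτ t‖ + ‖Fσ t‖ := norm_sub_le _ _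
      _ ≤ M1 + M2 := add_le_add (hM1 t ht) (hM2 t ht)
  have hS0 : ∀ r ∈ S, 0 ≤ r := by
    rintro r ⟨h, hc, hbij, h00, h11, hb⟩
    exact le_trans dist_nonneg (hb 0 (by constructor <;> norm_num))
  -- pointwise key estimate for any reparametrization
  have keystep : ∀ r ∈ S, (1 - ε) ^ 2 * frechetDist τ σ ^ 2 - 2 * ε * α ^ 2 ≤ r ^ 2 := by
    rintro r ⟨h, hc, hbij, h00, h11, hb⟩
    have hr0 : 0 ≤ r := hS0 r ⟨h, hc, hbij, h00, h11, hb⟩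
    set X := r ^ 2 + 2 * ε * α ^ 2 with hXdef
    have hX0 : 0 ≤ X := by positivity
    set R := Real.sqrt X / (1 - ε) with hRdef
    have h1ε : (0:ℝ) < 1 - ε := by linarith
    -- show frechetDist τ σ ≤ R
    have hmem : R ∈ {r : ℝ | ∃ h : ℝ → ℝ, ContinuousOn h (Set.Icc 0 1) ∧
        Set.BijOn h (Set.Icc 0 1) (Set.Icc 0 1) ∧ h 0 = 0 ∧ h 1 = 1 ∧
        ∀ t ∈ Set.Icc (0 : ℝ) 1, dist (τ t) (σ (h t)) ≤ r} := by
      refine ⟨h, hc, hbij, h00, h11, ?_⟩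
      intro t ht
      have hut : h t ∈ Set.Icc (0:ℝ) 1 := hbij.mapsTo ht
      obtain ⟨i, hi, s, hs0, hs1, hτt, hFτt⟩ :=
        interp_pair hmτ vτ (f ∘ vτ) tτ htτ htτ0 htτ1 τ Fτ hτ hFτ ht.1 ht.2
      obtain ⟨j, hj, u, hu0, hu1, hσt, hFσt⟩ :=
        interp_pair hmσ vσ (f ∘ vσ) tσ htσ htσ0 htσ1 σ Fσ hσ hFσ hut.1 hut.2
      set a := vτ ⟨i, by omega⟩
      set b := vτ ⟨i+1, hi⟩
      set c := vσ ⟨j, by omega⟩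
      set w := vσ ⟨j+1, hj⟩
      have ma : a ∈ Set.range vτ ∪ Set.range vσ := Set.mem_union_left _ (Set.mem_range_self _)
      have mb : b ∈ Set.range vτ ∪ Set.range vσ := Set.mem_union_left _ (Set.mem_range_self _)
      have mc : c ∈ Set.range vτ ∪ Set.range vσ := Set.mem_union_right _ (Set.mem_range_self _)
      have mw : w ∈ Set.range vτ ∪ Set.range vσ := Set.mem_union_right _ (Set.mem_range_self _)
      have hab : ‖a - b‖ ≤ α := by
        rw [← dist_eq_norm]
        exact le_trans (edge_le_edgeMax vτ i hi) (le_max_left _ _)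
      have hcw : ‖c - w‖ ≤ α := by
        rw [← dist_eq_norm]
        exact le_trans (edge_le_edgeMax vσ j hj) (le_max_right _ _)
      have key := key_pointwise ε α hε0 hε1 a b c w (f a) (f b) (f c) (f w) s u
        hs0 hs1 hu0 hu1 hab hcw
        (hf a ma c mc).1 (hf a ma w mw).1 (hf b mb c mc).1 (hf b mb w mw).1
        (hf a ma b mb).2 (hf c mc w mw).2
      have hFbd : ‖Fτ t - Fσ (h t)‖ ≤ r := by
        rw [← dist_eq_norm]; exact hb t ht
      have hFsq : ‖Fτ t - Fσ (h t)‖ ^ 2 ≤ r ^ 2 := pow_le_pow_left₀ (norm_nonneg _) hFbd 2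
      have hFeq : Fτ t - Fσ (h t) = (f a + s • (f b - f a)) - (f c + u • (f w - f c)) := by
        rw [hFτt, hFσt]; rfl
      have hτeq : τ t - σ (h t) = (a + s • (b - a)) - (c + u • (w - c)) := by
        rw [hτt, hσt]
      have hkey2 : (1 - ε) ^ 2 * ‖τ t - σ (h t)‖ ^ 2 ≤ X := by
        rw [hτeq]
        rw [hFeq] at hFsq
        linarith [key, hFsq]
      -- conclude dist ≤ R
      rw [dist_eq_norm]
      have h5 : ((1 - ε) * ‖τ t - σ (h t)‖) ^ 2 ≤ X := by rw [mul_pow]; exact hkey2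
      have h6 : (1 - ε) * ‖τ t - σ (h t)‖ ≤ Real.sqrt X := by
        have := Real.sqrt_le_sqrt h5
        rwa [Real.sqrt_sq (mul_nonneg h1ε.le (norm_nonneg _))] at this
      rw [hRdef, le_div_iff₀ h1ε]
      linarith
    have hbdd : BddBelow {r : ℝ | ∃ h : ℝ → ℝ, ContinuousOn h (Set.Icc 0 1) ∧
        Set.BijOn h (Set.Icc 0 1) (Set.Icc 0 1) ∧ h 0 = 0 ∧ h 1 = 1 ∧
        ∀ t ∈ Set.Icc (0 : ℝ) 1, dist (τ t) (σ (h t)) ≤ r} := by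
      refine ⟨0, ?_⟩
      rintro r' ⟨h', hc', hbij', h00', h11', hb'⟩
      exact le_trans dist_nonneg (hb' 0 (by constructor <;> norm_num))
    have hle : frechetDist τ σ ≤ R := csInf_le hbdd hmem
    have hF0 : 0 ≤ frechetDist τ σ := by
      apply Real.sInf_nonneg
      rintro r' ⟨h', hc', hbij', h00', h11', hb'⟩
      exact le_trans dist_nonneg (hb' 0 (by constructor <;> norm_num))
    have hsq : frechetDist τ σ ^ 2 ≤ R ^ 2 := pow_le_pow_left₀ hF0 hle 2
    have hR2 : R ^ 2 = X / (1 - ε)^2 := by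
      rw [hRdef, div_pow, Real.sq_sqrt hX0]
    rw [hR2, le_div_iff₀ (by positivity : (0:ℝ) < (1-ε)^2)] at hsq
    have hXX : X = r ^ 2 + 2 * ε * α ^ 2 := hXdef
    nlinarith [hsq]
  -- final sInf argument
  set L := (1 - ε) ^ 2 * frechetDist τ σ ^ 2 - 2 * ε * α ^ 2 with hLdef
  have hFd : frechetDist Fτ Fσ = sInf S := rfl
  have hsqrt : Real.sqrt (max L 0) ≤ frechetDist Fτ Fσ := by
    rw [hFd]
    apply le_csInf hSne
    intro r hr
    have hL : max L 0 ≤ r ^ 2 := max_le (keystep r hr) (by positivity)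
    have := Real.sqrt_le_sqrt hL
    rwa [Real.sqrt_sq (hS0 r hr)] at this
  have h8 : Real.sqrt (max L 0) ^ 2 ≤ frechetDist Fτ Fσ ^ 2 :=
    pow_le_pow_left₀ (Real.sqrt_nonneg _) hsqrt 2
  rw [Real.sq_sqrt (le_max_right _ _)] at h8
  calc L ≤ max L 0 := le_max_left _ _
    _ ≤ frechetDist Fτ Fσ ^ 2 := h8
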